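/- For every simple type A, the verifier applied to the generator succeeds: ⟨A⟩(✠A) reduces in zero or more steps to ⋆ (the correctness property of verifier/generator pairs for minimal logic). -/

import Mathlib

/-! The metacalculus λ→m for minimal logic: untyped λ-calculus extended with
a success constant ⋆, a guard construct (M; N), and generators ✠𝐚 / verifiers ⟨𝐚⟩
for atomic types. Terms use de Bruijn indices. -/

/-- Simple types: atomic types and arrows. -/
inductive Ty : Type
  | atom : ℕ → Ty
  | arrow : Ty → Ty → Ty

/-- Metaterms of the metacalculus λ→m (de Bruijn indices). -/
inductive Tm : Type
  | var : ℕ → Tm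
  | lam : Tm → Tm
  | app : Tm → Tm → Tm
  | star : Tm
  | guard : Tm → Tm → Tm
  | gen : ℕ → Tm
  | verif : ℕ → Tm → Tm

namespace Tm

/-- Shift de Bruijn indices ≥ c by d. -/
def shift (d c : ℕ) : Tm → Tm
  | var n => if n < c then var n else var (n + d)
  | lam M => lam (shift d (c+1) M)
  | app M N => app (shift d c M) (shift d c N)
  | star => star
  | guard M N => guard (shift d c M) (shift d c N)
  | gen a => gen a
  | verif a M => verif a (shift d c M)

/-- Capture-avoiding substitution of the variable k by N. -/
def subst (k : ℕ) (N : Tm) : Tm → Tm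
  | var n => if n = k then N else if k < n then var (n - 1) else var n
  | lam M => lam (subst (k+1) (shift 1 0 N) M)
  | app M P => app (subst k N M) (subst k N P)
  | star => star
  | guard M P => guard (subst k N M) (subst k N P)
  | gen a => gen a
  | verif a M => verif a (subst k N M)

/-- Pure metaterms: only variables, abstractions and applications. -/
def Pure : Tm → Prop
  | var _ => True
  | lam M => Pure M
  | app M N => Pure M ∧ Pure N
  | _ => False

end Tm

/-- One-step reduction of λ→m, closed under arbitrary contexts. -/
inductive Step : Tm → Tm → Prop
  | beta (M N : Tm) : Step (.app (.lam M) N) (Tm.subst 0 N M)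
  | guardStar (M : Tm) : Step (.guard .star M) M
  | verifGen (a : ℕ) : Step (.verif a (.gen a)) .star
  | lam {M M'} : Step M M' → Step (.lam M) (.lam M')
  | appL {M M'} (N) : Step M M' → Step (.app M N) (.app M' N)
  | appR {N N'} (M) : Step N N' → Step (.app M N) (.app M N')
  | guardL {M M'} (N) : Step M M' → Step (.guard M N) (.guard M' N)
  | guardR {N N'} (M) : Step N N' → Step (.guard M N) (.guard M N')
  | verif {M M'} (a) : Step M M' → Step (.verif a M) (.verif a M')

/-- Weak head reduction of λ→m: the rules closed under weak head contexts only. -/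
inductive WStep : Tm → Tm → Prop
  | beta (M N : Tm) : WStep (.app (.lam M) N) (Tm.subst 0 N M)
  | guardStar (M : Tm) : WStep (.guard .star M) M
  | verifGen (a : ℕ) : WStep (.verif a (.gen a)) .star
  | appL {M M'} (N) : WStep M M' → WStep (.app M N) (.app M' N)
  | guardL {M M'} (N) : WStep M M' → WStep (.guard M N) (.guard M' N)
  | verif {M M'} (a) : WStep M M' → WStep (.verif a M) (.verif a M')

/-- β-reduction alone, closed under arbitrary contexts. -/
inductive BStep : Tm → Tm → Prop
  | beta (M N : Tm) : BStep (.app (.lam M) N) (Tm.subst 0 N M)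
  | lam {M M'} : BStep M M' → BStep (.lam M) (.lam M')
  | appL {M M'} (N) : BStep M M' → BStep (.app M N) (.app M' N)
  | appR {N N'} (M) : BStep N N' → BStep (.app M N) (.app M N')
  | guardL {M M'} (N) : BStep M M' → BStep (.guard M N) (.guard M' N)
  | guardR {N N'} (M) : BStep N N' → BStep (.guard M N) (.guard M N')
  | verif {M M'} (a) : BStep M M' → BStep (.verif a M) (.verif a M')

mutual
/-- The generator ✠A for an arbitrary simple type A. -/
def genT : Ty → Tm
  | .atom a => .gen a
  | .arrow A B => .lam (.guard (verifT A (.var 0)) (genT B))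
/-- The verifier ⟨A⟩M for an arbitrary simple type A applied to M. -/
def verifT : Ty → Tm → Tm
  | .atom a, M => .verif a M
  | .arrow A B, M => verifT B (.app M (genT A))
end

/-! Induction on the type. Generators are closed terms, so substitution leaves them fixed and
`✠(A ⇒ B) ✠A` β-reduces to `(⟨A⟩✠A; ✠B)`; hence `⟨A ⇒ B⟩✠(A ⇒ B) → ⟨B⟩(⟨A⟩✠A; ✠B)`, which reduces
by the hypothesis for `A` to `⟨B⟩(⋆; ✠B) → ⟨B⟩✠B`, and then to `⋆` by the hypothesis for `B`. -/

mutual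
theorem subst_genT (k : ℕ) (N : Tm) : ∀ A : Ty, Tm.subst k N (genT A) = genT A
  | .atom _ => rfl
  | .arrow A B => by
    simp [genT, Tm.subst, subst_verifT, subst_genT]
theorem subst_verifT (k : ℕ) (N : Tm) : ∀ (A : Ty) (M : Tm),
    Tm.subst k N (verifT A M) = verifT A (Tm.subst k N M)
  | .atom _, _ => rfl
  | .arrow A B, M => by
    simp only [verifT, subst_verifT, Tm.subst, subst_genT]
end

theorem Step.genT_arrow_app (A B : Ty) (M : Tm) :
    Step (.app (genT (.arrow A B)) M) (.guard (verifT A M) (genT B)) := by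
  simpa [genT, Tm.subst, subst_verifT, subst_genT] using
    Step.beta (.guard (verifT A (.var 0)) (genT B)) M

theorem Step.verifT {M M' : Tm} (A : Ty) (h : Step M M') : Step (verifT A M) (verifT A M') := by
  induction A generalizing M M' with
  | atom a => exact Step.verif a h
  | arrow _ _ _ ihB => exact ihB (Step.appL _ h)

theorem reflTransGen_step_verifT {M M' : Tm} (A : Ty) (h : Relation.ReflTransGen Step M M') :
    Relation.ReflTransGen Step (verifT A M) (verifT A M') :=
  h.lift (verifT A) fun _ _ => Step.verifT A

theorem reflTransGen_step_guard_star {M N : Tm} (h : Relation.ReflTransGen Step M .star) :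
    Relation.ReflTransGen Step (.guard M N) N :=
  (h.lift (Tm.guard · N) fun _ _ => Step.guardL N).tail (Step.guardStar N)

/-- Correctness: for every simple type A, the verifier applied to
the generator succeeds: ⟨A⟩(✠A) reduces in zero or more steps to ⋆. -/
theorem correctness (A : Ty) :
    Relation.ReflTransGen Step (verifT A (genT A)) Tm.star := by
  induction A with
  | atom a => exact .single (Step.verifGen a)
  | arrow A B ihA ihB =>
    have beta : Step (verifT (.arrow A B) (genT (.arrow A B)))
        (verifT B (.guard (verifT A (genT A)) (genT B))) :=
      Step.verifT B (Step.genT_arrow_app A B (genT A))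
    exact .head beta ((reflTransGen_step_verifT B (reflTransGen_step_guard_star ihA)).trans ihB)
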